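/- arXiv:1212.6067 — 8 statements merged into one kernel-verified Lean document; each statement's English description precedes it below -/
import Mathlib

section
/- Let p be a prime and R an associative ring whose additive group has finite exponent p^m. If R is left p-nil (i.e., every element x with px = 0 satisfies xy = 0 for all y ∈ R), then R is nilpotent of class at most m, i.e., R^{m+1} = 0. -/
/-! If `p ^ (n + 1) • x = 0` then `p ^ n • x` is `p`-torsion, so `p ^ n • (x * y) = (p ^ n • x) * y = 0`:
each right factor lowers by one the power of `p` that kills the product. Starting from
`p ^ m • x = 0`, a product of `m + 1` elements is therefore killed by `p ^ 0 = 1`. -/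

/-- `listMul x l` is the product of `x` followed by the entries of `l`
(a product of `l.length + 1` ring elements). -/
def listMul {R : Type*} [NonUnitalRing R] : R → List R → R
  | x, [] => x
  | x, y :: l => listMul (x * y) l

section LeftPNil

variable {R : Type*} [NonUnitalRing R] {p : ℕ}

theorem pow_smul_mul_eq_zero_of_pow_succ_smul_eq_zero
    (hpnil : ∀ x : R, p • x = 0 → ∀ y : R, x * y = 0) {n : ℕ} {x : R}
    (hx : p ^ (n + 1) • x = 0) (y : R) : p ^ n • (x * y) = 0 := by
  rw [← smul_mul_assoc]
  exact hpnil _ (by rwa [smul_smul, ← pow_succ']) y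

theorem listMul_eq_zero_of_pow_length_smul_eq_zero
    (hpnil : ∀ x : R, p • x = 0 → ∀ y : R, x * y = 0) :
    ∀ {x : R} (l : List R), p ^ l.length • x = 0 → listMul x l = 0
  | _, [], hx => by simpa [listMul] using hx
  | _, y :: l, hx =>
    listMul_eq_zero_of_pow_length_smul_eq_zero hpnil l
      (pow_smul_mul_eq_zero_of_pow_succ_smul_eq_zero hpnil hx y)

end LeftPNil

theorem left_pnil_ring_nilpotent_general {R : Type*} [NonUnitalRing R] (p m : ℕ)
    (hexp : ∀ x : R, (p ^ m) • x = 0)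
    (hpnil : ∀ x : R, p • x = 0 → ∀ y : R, x * y = 0) :
    ∀ (x : R) (l : List R), l.length = m → listMul x l = 0 := by
  intro x l hl
  exact listMul_eq_zero_of_pow_length_smul_eq_zero hpnil l (hl ▸ hexp x)

/-- Let `p` be a prime and `R` an associative ring whose additive group has exponent
dividing `p^m`.  If `R` is left `p`-nil (every `x` with `p • x = 0` satisfies `x * y = 0`
for all `y`), then `R` is nilpotent of class at most `m`: every product of `m + 1`
elements vanishes. -/
theorem left_pnil_ring_nilpotent {R : Type*} [NonUnitalRing R] (p m : ℕ)
    (hp : p.Prime)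
    (hexp : ∀ x : R, (p ^ m) • x = 0)
    (hpnil : ∀ x : R, p • x = 0 → ∀ y : R, x * y = 0) :
    ∀ (x : R) (l : List R), l.length = m → listMul x l = 0 :=
  left_pnil_ring_nilpotent_general p m hexp hpnil
end

section
/- Let p be a prime and R a left p-nil associative ring. Then for each n ≥ 1, the quotient ring R/Ω_n(R) is left p-nil, where Ω_n(R) = {x ∈ R : p^n x = 0}. -/
/-- Let `p` be a prime and `R` a left `p`-nil associative ring (`p • x = 0` implies
`x * y = 0` for all `y`).  Then for each `n ≥ 1`, the quotient of `R` by the ideal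
`Ω_n(R) = {x | p^n • x = 0}` is again left `p`-nil.  The quotient is presented
abstractly as a surjective non-unital ring homomorphism `f : R → Q` whose kernel is
`Ω_n(R)`. -/
theorem quotient_omega_left_pnil {R Q : Type*} [NonUnitalRing R] [NonUnitalRing Q]
    (p n : ℕ) (hp : p.Prime) (hn : 1 ≤ n)
    (hpnil : ∀ x : R, p • x = 0 → ∀ y : R, x * y = 0)
    (f : R →ₙ+* Q) (hsurj : Function.Surjective f)
    (hker : ∀ x : R, f x = 0 ↔ (p ^ n) • x = 0) :
    ∀ a : Q, p • a = 0 → ∀ b : Q, a * b = 0 := by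
  intro a ha b
  obtain ⟨x, rfl⟩ := hsurj a
  obtain ⟨y, rfl⟩ := hsurj b
  have h1 : f (p • x) = 0 := by rw [map_nsmul]; exact ha
  have h2 : p ^ n • (p • x) = 0 := (hker _).mp h1
  have h3 : p • (p ^ n • x) = 0 := by
    rw [smul_smul] at h2 ⊢; rwa [Nat.mul_comm]
  have h4 : (p ^ n • x) * y = 0 := hpnil _ h3 y
  have h5 : p ^ n • (x * y) = 0 := by rwa [smul_mul_assoc] at h4
  rw [← map_mul]
  exact (hker _).mpr h5
end

section
/- Let p be an odd prime and R an associative ring in which every element has additive order a power of p, and assume R is left p-nil. If x ∈ R satisfies px = 0, then the p-th power of x in the adjoint group equals 0; conversely, if the p-th power of x under the circle operation equals 0, then px = 0. That is, Ω_{\{1\}}(R^∘) = Ω_1(R). -/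
/-- `cpow x k` is the `k`-th power of `x` under the circle operation
`a ∘ b = a + b + a * b`: `cpow x 0 = 0` and `cpow x (k+1) = x ∘ cpow x k`. -/
def cpow {R : Type*} [NonUnitalRing R] (x : R) : ℕ → R
  | 0 => 0
  | k + 1 => x + cpow x k + x * cpow x k

/-! In `x ^ (p) = p x + C(p,2) x² + x³(…)`, the hypothesis `p x = 0` kills everything past the linear
term, since left `p`-nilness makes `x` a left annihilator. Conversely, if `x ^ (p) = 0` and
`p ^ (k + 2) x = 0`, multiplying the expansion by `p ^ k` leaves `p ^ (k + 1) x = 0`: the quadratic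
term dies because `p ∣ C(p,2)` for odd `p` and `p ^ (k + 1) x` is a left annihilator, the rest
because `p ^ k x²` is one. Descending from the additive order of `x` gives `p x = 0`. -/

section CircPow

variable {R : Type*} [NonUnitalRing R]

theorem cpow_eq_nsmul_of_mul_self_eq_zero {x : R} (hx : x * x = 0) (n : ℕ) :
    cpow x n = n • x := by
  induction n with
  | zero => simp [cpow]
  | succ n ih => rw [cpow, ih, mul_smul_comm, hx, smul_zero, add_zero, succ_nsmul, add_comm]

theorem exists_cpow_eq (x : R) (n : ℕ) :
    ∃ z : R, cpow x n = n • x + n.choose 2 • (x * x) + x * x * z := by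
  induction n with
  | zero => exact ⟨0, by simp [cpow]⟩
  | succ n ih =>
    obtain ⟨z, hz⟩ := ih
    refine ⟨z + n.choose 2 • x + x * z, ?_⟩
    rw [cpow, hz, Nat.choose_succ_succ, Nat.choose_one_right]
    simp only [mul_add, mul_smul_comm, ← mul_assoc, add_smul, one_smul]
    abel

end CircPow

section LeftPNil

variable {R : Type*} [NonUnitalRing R] {p : ℕ}

theorem nsmul_pow_succ_eq_zero_of_cpow_eq_zero
    (hpnil : ∀ x : R, p • x = 0 → ∀ y : R, x * y = 0) (hp2 : p ∣ p.choose 2)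
    {x : R} (hc : cpow x p = 0) {k : ℕ} (hk : p ^ (k + 2) • x = 0) :
    p ^ (k + 1) • x = 0 := by
  have hlin : ∀ y, (p ^ (k + 1) • x) * y = 0 :=
    hpnil _ (by rwa [smul_smul, ← pow_succ'])
  have hsq : ∀ y, (p ^ k • (x * x)) * y = 0 :=
    hpnil _ (by rw [smul_smul, ← pow_succ', ← smul_mul_assoc]; exact hlin x)
  obtain ⟨z, hz⟩ := exists_cpow_eq x p
  obtain ⟨m, hm⟩ := hp2
  have hquad : p ^ k • p.choose 2 • (x * x) = 0 := by
    rw [hm, smul_smul, show p ^ k * (p * m) = m * p ^ (k + 1) by ring, mul_smul,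
      ← smul_mul_assoc, hlin, smul_zero]
  have hcube : p ^ k • (x * x * z) = 0 := by rw [← smul_mul_assoc]; exact hsq z
  calc p ^ (k + 1) • x = p ^ k • cpow x p := by
        rw [hz, smul_add, smul_add, hquad, hcube, smul_smul, ← pow_succ, add_zero, add_zero]
    _ = 0 := by rw [hc, smul_zero]

theorem nsmul_eq_zero_of_cpow_eq_zero
    (hpnil : ∀ x : R, p • x = 0 → ∀ y : R, x * y = 0) (hp2 : p ∣ p.choose 2)
    {x : R} (hc : cpow x p = 0) {k : ℕ} (hk : p ^ k • x = 0) :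
    p • x = 0 := by
  induction k with
  | zero => rw [pow_zero, one_smul] at hk; rw [hk, smul_zero]
  | succ k ih =>
    cases k with
    | zero => simpa using hk
    | succ k => exact ih (nsmul_pow_succ_eq_zero_of_cpow_eq_zero hpnil hp2 hc hk)

end LeftPNil

/-- Let `p` be an odd prime and `R` an associative ring in which every element has
additive order a power of `p`, and assume `R` is left `p`-nil.  Then an element `x`
satisfies `p • x = 0` if and only if its `p`-th power in the adjoint group is `0`;
that is, `Ω_{{1}}(R^∘) = Ω_1(R)`. -/
theorem omega_one_adjoint_eq_omega_one {R : Type*} [NonUnitalRing R] (p : ℕ)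
    (hp : p.Prime) (hodd : p ≠ 2)
    (hpring : ∀ x : R, ∃ k : ℕ, (p ^ k) • x = 0)
    (hpnil : ∀ x : R, p • x = 0 → ∀ y : R, x * y = 0) :
    ∀ x : R, p • x = 0 ↔ cpow x p = 0 := by
  intro x
  constructor
  · intro h
    rw [cpow_eq_nsmul_of_mul_self_eq_zero (hpnil x h x), h]
  · intro hc
    have hp2 : p ∣ p.choose 2 :=
      hp.dvd_choose_self two_ne_zero (hp.two_le.lt_of_ne (Ne.symm hodd))
    obtain ⟨k, hk⟩ := hpring x
    exact nsmul_eq_zero_of_cpow_eq_zero hpnil hp2 hc hk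
end

section
/- Let p be an odd prime and R a finite p-ring (every element has additive order a power of p) that is p-nil (both left and right p-nil). Then every element x of R with x^{(p)} = 0 (p-th power in the adjoint group equal to 0) lies in the center of the adjoint group R^∘; i.e., R^∘ is p-central. -/
section Aux

variable {R : Type*} [NonUnitalRing R]

/-- Descent step: if `p^(k+2) • x = 0` and `cpow x p = 0`, then `p^(k+1) • x = 0`. -/
lemma cpow_descent (p k : ℕ) (hp : p.Prime) (hodd : p ≠ 2)
    (hpnil : ∀ x : R, p • x = 0 → ∀ y : R, x * y = 0 ∧ y * x = 0)
    (x : R) (h : (p ^ (k + 2)) • x = 0) (hc : cpow x p = 0) :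
    (p ^ (k + 1)) • x = 0 := by
  have ha : ∀ y : R, ((p ^ (k + 1)) • x) * y = 0 ∧ y * ((p ^ (k + 1)) • x) = 0 := by
    apply hpnil
    rw [smul_smul, ← pow_succ']
    exact h
  set b : R := (p ^ k) • (x * x) with hbdef
  have hpb : p • b = 0 := by
    rw [hbdef, smul_smul, ← pow_succ', ← smul_mul_assoc]
    exact (ha x).1
  have hb : ∀ y : R, b * y = 0 ∧ y * b = 0 := hpnil b hpb
  have claim1 : ∀ j : ℕ, (p ^ k) • (x * cpow x j) = j • b := by
    intro j
    induction j with
    | zero => simp [cpow]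
    | succ j ih =>
      rw [cpow, mul_add, mul_add, smul_add, smul_add, ih, ← mul_assoc]
      have h2 : (p ^ k) • (x * x * cpow x j) = b * cpow x j := by
        rw [hbdef, smul_mul_assoc]
      rw [h2, (hb _).1, add_zero, succ_nsmul]
      rw [hbdef]
      abel
  have claim2 : ∀ j : ℕ, (p ^ k) • cpow x j = j • ((p ^ k) • x) + (j.choose 2) • b := by
    intro j
    induction j with
    | zero => simp [cpow]
    | succ j ih =>
      rw [cpow, smul_add, smul_add, ih, claim1]
      have hch : (j + 1).choose 2 = j.choose 2 + j := by
        rw [Nat.choose_succ_succ]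
        simp [Nat.choose_one_right, Nat.add_comm]
      rw [hch, succ_nsmul, add_nsmul]
      abel
  have key : (0 : R) = (p ^ (k + 1)) • x + (p.choose 2) • b := by
    have := claim2 p
    rw [hc, smul_zero] at this
    rw [this]
    congr 1
    rw [smul_smul, ← pow_succ']
  have hdvd : p ∣ p.choose 2 := by
    apply Nat.Prime.dvd_choose_self hp (by norm_num)
    exact lt_of_le_of_ne hp.two_le (Ne.symm hodd)
  obtain ⟨c, hc2⟩ := hdvd
  have hzero : (p.choose 2) • b = 0 := by
    rw [hc2, mul_comm, mul_smul, hpb, smul_zero]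
  rw [hzero, add_zero] at key
  exact key.symm

lemma cpow_p_smul (p : ℕ) (hp : p.Prime) (hodd : p ≠ 2)
    (hpnil : ∀ x : R, p • x = 0 → ∀ y : R, x * y = 0 ∧ y * x = 0) :
    ∀ (k : ℕ) (x : R), (p ^ k) • x = 0 → cpow x p = 0 → p • x = 0 := by
  intro k
  induction k with
  | zero =>
    intro x h hc
    simp only [pow_zero, one_smul] at h
    simp [h]
  | succ k ih =>
    intro x h hc
    cases k with
    | zero => simpa using h
    | succ k => exact ih x (cpow_descent p k hp hodd hpnil x h hc) hc

end Aux

/-- Let `p` be an odd prime and `R` a finite `p`-ring (every element has additive order a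
power of `p`) which is `p`-nil (elements killed by `p` annihilate `R` on both sides).
Then every element `x` with `x^{(p)} = 0` (`p`-th power in the adjoint group equal to
`0`) lies in the center of the adjoint group `R^∘`: `x` is invertible under the circle
operation `a ∘ b = a + b + a*b`, and `x` commutes under `∘` with every invertible
element.  In other words, `R^∘` is `p`-central. -/
theorem adjoint_group_p_central {R : Type*} [NonUnitalRing R] [Finite R] (p : ℕ)
    (hp : p.Prime) (hodd : p ≠ 2)
    (hpring : ∀ x : R, ∃ k : ℕ, (p ^ k) • x = 0)
    (hpnil : ∀ x : R, p • x = 0 → ∀ y : R, x * y = 0 ∧ y * x = 0) :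
    ∀ x : R, cpow x p = 0 →
      (∃ z : R, x + z + x * z = 0 ∧ z + x + z * x = 0) ∧
      ∀ y : R, (∃ z : R, y + z + y * z = 0 ∧ z + y + z * y = 0) →
        x + y + x * y = y + x + y * x := by
  intro x hx
  obtain ⟨k, hk⟩ := hpring x
  have hpx : p • x = 0 := cpow_p_smul p hp hodd hpnil k x hk hx
  have hann := hpnil x hpx
  constructor
  · refine ⟨-x, ?_, ?_⟩
    · have := (hann (-x)).1
      rw [this]
      abel
    · have := (hann (-x)).2
      rw [this]
      abel
  · intro y _
    rw [(hann y).1, (hann y).2, add_zero, add_zero, add_comm]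
end

section
/- For any group G, the map σ ↦ h_σ, where h_σ(x) = x⁻¹σ(x), defines a group isomorphism between the central automorphism group Aut_c(G) and the adjoint group of the ring Hom(G, Z(G)). -/
section AY
variable {G : Type*} [Group G]

private lemma ay_comm {a : G} (ha : a ∈ Subgroup.center G) (b : G) : a * b = b * a :=
  (Subgroup.mem_center_iff.mp ha b).symm

/-- key computation for composition -/
private lemma ay_key (σ τ : G ≃* G) (hσ : ∀ x : G, x⁻¹ * σ x ∈ Subgroup.center G) (x : G) :
    x⁻¹ * τ (σ x) =
      (x⁻¹ * σ x) * (x⁻¹ * τ x) * ((x⁻¹ * σ x)⁻¹ * τ (x⁻¹ * σ x)) := by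
  set a := x⁻¹ * σ x with ha
  have hσx : σ x = x * a := by rw [ha]; group
  have hc : ∀ b : G, a * b = b * a := ay_comm (hσ x)
  rw [hσx, map_mul]
  rw [show a * (x⁻¹ * τ x) * (a⁻¹ * τ a) = (a * (x⁻¹ * τ x) * a⁻¹) * τ a by group]
  rw [show a * (x⁻¹ * τ x) * a⁻¹ = x⁻¹ * τ x by rw [hc]; group]
  group

end AY

/-- For any group `G`, the Adney–Yen map `σ ↦ h_σ`, `h_σ(x) = x⁻¹ * σ x`, is a group
isomorphism from the central automorphism group `Aut_c(G)` (automorphisms `σ` with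
`x⁻¹ σ(x) ∈ Z(G)` for all `x`, under composition) onto the adjoint group of the ring
`Hom(G, Z(G))` (the invertible elements, under the circle operation
`(h₁ ∘ h₂)(x) = h₁ x * h₂ x * h₂ (h₁ x)`, of the set of homomorphisms `G → Z(G)`):
it is injective on central automorphisms, its image is exactly the set of
circle-invertible homomorphisms `G → Z(G)`, and it sends composition of automorphisms
to the circle operation. -/
theorem autc_iso_adjoint_group_hom_center {G : Type*} [Group G] :
    Set.InjOn (fun (σ : G ≃* G) => fun x : G => x⁻¹ * σ x)
        {σ : G ≃* G | ∀ x : G, x⁻¹ * σ x ∈ Subgroup.center G} ∧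
    (fun (σ : G ≃* G) => fun x : G => x⁻¹ * σ x) ''
        {σ : G ≃* G | ∀ x : G, x⁻¹ * σ x ∈ Subgroup.center G} =
      {h : G → G | ((∀ x : G, h x ∈ Subgroup.center G) ∧
          ∀ x y : G, h (x * y) = h x * h y) ∧
        ∃ k : G → G, ((∀ x : G, k x ∈ Subgroup.center G) ∧
            ∀ x y : G, k (x * y) = k x * k y) ∧
          (∀ x : G, h x * k x * k (h x) = 1) ∧ (∀ x : G, k x * h x * h (k x) = 1)} ∧
    ∀ σ ∈ {σ : G ≃* G | ∀ x : G, x⁻¹ * σ x ∈ Subgroup.center G},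
      ∀ τ ∈ {σ : G ≃* G | ∀ x : G, x⁻¹ * σ x ∈ Subgroup.center G},
        (fun x : G => x⁻¹ * (σ.trans τ) x) =
          fun x : G => (x⁻¹ * σ x) * (x⁻¹ * τ x) * ((x⁻¹ * σ x)⁻¹ * τ (x⁻¹ * σ x)) := by
  -- multiplicativity of h_σ
  have hmulσ : ∀ (σ : G ≃* G), (∀ x : G, x⁻¹ * σ x ∈ Subgroup.center G) →
      ∀ x y : G, (x * y)⁻¹ * σ (x * y) = (x⁻¹ * σ x) * (y⁻¹ * σ y) := by
    intro σ hσ x y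
    have hc := ay_comm (hσ x) y⁻¹
    rw [map_mul, show (x*y)⁻¹ * (σ x * σ y) = y⁻¹ * (x⁻¹ * σ x) * σ y by group,
      ← hc]
    group
  -- symm is central
  have hsymm : ∀ (σ : G ≃* G), (∀ x : G, x⁻¹ * σ x ∈ Subgroup.center G) →
      ∀ x : G, x⁻¹ * σ.symm x ∈ Subgroup.center G := by
    intro σ hσ x
    have h1 : σ (x⁻¹ * σ.symm x) = (x⁻¹ * σ x)⁻¹ := by
      rw [map_mul, MulEquiv.apply_symm_apply, map_inv]; group
    have h2 : x⁻¹ * σ.symm x = σ.symm ((x⁻¹ * σ x)⁻¹) := by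
      rw [← h1, MulEquiv.symm_apply_apply]
    rw [h2]
    have hz : (x⁻¹ * σ x)⁻¹ ∈ Subgroup.center G := inv_mem (hσ x)
    rw [Subgroup.mem_center_iff]
    intro g
    have := ay_comm hz (σ g)
    calc g * σ.symm (x⁻¹ * σ x)⁻¹ = σ.symm (σ g * (x⁻¹ * σ x)⁻¹) := by
          rw [map_mul, MulEquiv.symm_apply_apply]
      _ = σ.symm ((x⁻¹ * σ x)⁻¹ * σ g) := by rw [this]
      _ = σ.symm (x⁻¹ * σ x)⁻¹ * g := by rw [map_mul, MulEquiv.symm_apply_apply]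
  refine ⟨?_, ?_, ?_⟩
  · intro σ hσ τ hτ h
    ext x
    exact mul_left_cancel (congrFun h x)
  · ext h
    constructor
    · rintro ⟨σ, hσ, rfl⟩
      refine ⟨⟨hσ, hmulσ σ hσ⟩, fun x => x⁻¹ * σ.symm x,
        ⟨hsymm σ hσ, hmulσ σ.symm (hsymm σ hσ)⟩, ?_, ?_⟩
      · intro x
        have := ay_key σ σ.symm hσ x
        rw [MulEquiv.symm_apply_apply] at this
        simp only [inv_mul_cancel] at this
        rw [show (x⁻¹ * σ x) * (x⁻¹ * σ.symm x) * ((x⁻¹ * σ x)⁻¹ * σ.symm (x⁻¹ * σ x))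
            = (x⁻¹ * σ x) * (x⁻¹ * σ.symm x) * (x⁻¹ * σ x)⁻¹ * σ.symm (x⁻¹ * σ x) by group]
          at this ⊢
        exact this.symm
      · intro x
        have := ay_key σ.symm σ (hsymm σ hσ) x
        rw [MulEquiv.apply_symm_apply] at this
        simp only [inv_mul_cancel] at this
        rw [show (x⁻¹ * σ.symm x) * (x⁻¹ * σ x) * ((x⁻¹ * σ.symm x)⁻¹ * σ (x⁻¹ * σ.symm x))
            = (x⁻¹ * σ.symm x) * (x⁻¹ * σ x) * (x⁻¹ * σ.symm x)⁻¹ * σ (x⁻¹ * σ.symm x) by group]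
          at this ⊢
        exact this.symm
    · rintro ⟨⟨hZ, hmul⟩, k, ⟨kZ, kmul⟩, hk, kh⟩
      refine ⟨⟨⟨fun x => x * h x, fun x => x * k x, ?_, ?_⟩, ?_⟩, fun x => ?_, ?_⟩
      · intro x
        simp only
        rw [kmul, show x * h x * (k x * k (h x)) = x * (h x * k x * k (h x)) by group, hk,
          mul_one]
      · intro x
        simp only
        rw [hmul, show x * k x * (h x * h (k x)) = x * (k x * h x * h (k x)) by group, kh,
          mul_one]
      · intro x y
        simp only
        rw [hmul, show x * h x * (y * h y) = x * (h x * y) * h y by group, ay_comm (hZ x) y]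
        group
      · simp only [MulEquiv.coe_mk, Equiv.coe_fn_mk]
        rw [inv_mul_cancel_left]
        exact hZ x
      · funext x
        simp only [MulEquiv.coe_mk, Equiv.coe_fn_mk]
        rw [inv_mul_cancel_left]
  · intro σ hσ τ hτ
    funext x
    exact ay_key σ τ hσ x
end

section
/- Let G be a finite p-group with Z(G) ≤ Φ(G). Then the ring Hom(G, Z(G)) is right p-nil: whenever h ∈ Hom(G, Z(G)) satisfies ph = 0, the composition k·h = h ∘ k is zero for all k ∈ Hom(G, Z(G)). -/
/-!
The image of `h` is an elementary abelian `p`-group, and such a group has trivial Frattini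
subgroup: a nontrivial element survives some character to `ZMod p`, whose kernel is maximal.
Since a surjection maps the Frattini subgroup into the Frattini subgroup, `Φ(G) ≤ ker h`, and
`k` takes values in `Z(G) ≤ Φ(G)`.
-/

open Subgroup

lemma exists_monoidHom_zmod_ne_one {p : ℕ} [Fact p.Prime] {A : Type*} [CommGroup A]
    (hA : ∀ a : A, a ^ p = 1) {a : A} (ha : a ≠ 1) :
    ∃ φ : A →* Multiplicative (ZMod p), φ a ≠ 1 := by
  let _ : Module (ZMod p) (Additive A) := AddCommGroup.zmodModule (n := p) fun x ↦ hA x.toMul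
  obtain ⟨f, hf⟩ := Module.Projective.exists_dual_ne_zero (V := Additive A) (ZMod p) ha
  exact ⟨AddMonoidHom.toMultiplicativeRight f.toAddMonoidHom, hf⟩

lemma isCoatom_ker_of_prime_card {G H : Type*} [Group G] [Group H] (hH : (Nat.card H).Prime)
    {φ : G →* H} (hφ : φ ≠ 1) : IsCoatom φ.ker := by
  have : Fact (Nat.card H).Prime := ⟨hH⟩
  have hbot : IsCoatom (⊥ : Subgroup H) := by
    have : Finite H := Nat.finite_of_card_ne_zero hH.ne_zero
    have : Nontrivial H := Finite.one_lt_card_iff_nontrivial.mp hH.one_lt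
    exact ⟨bot_ne_top, fun K hK ↦ (eq_bot_or_eq_top_of_prime_card K).resolve_left hK.ne'⟩
  have hsurj : φ.range = ⊤ :=
    (eq_bot_or_eq_top_of_prime_card φ.range).resolve_left (mt MonoidHom.range_eq_bot_iff.mp hφ)
  rw [← MonoidHom.comap_bot]
  exact isCoatom_comap_of_surjective (MonoidHom.range_eq_top.mp hsurj) hbot

lemma frattini_eq_bot_of_pow_eq_one {p : ℕ} [Fact p.Prime] {A : Type*} [Group A]
    [IsMulCommutative A] (hA : ∀ a : A, a ^ p = 1) : frattini A = ⊥ := by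
  let _ : CommGroup A := { mul_comm := mul_comm' }
  refine eq_bot_iff.mpr fun a ha ↦ ?_
  by_contra ha1
  obtain ⟨φ, hφ⟩ := exists_monoidHom_zmod_ne_one hA ha1
  have hcard : (Nat.card (Multiplicative (ZMod p))).Prime := by
    simpa using (Fact.out : p.Prime)
  have hφ1 : φ ≠ 1 := fun h ↦ hφ (by simp [h])
  exact hφ (frattini_le_coatom (isCoatom_ker_of_prime_card hcard hφ1) ha)

lemma frattini_le_ker_of_pow_eq_one {p : ℕ} [Fact p.Prime] {G A : Type*} [Group G] [Group A]
    [IsMulCommutative A] {f : G →* A} (hf : ∀ x, f x ^ p = 1) : frattini G ≤ f.ker := by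
  have hrange : frattini f.range = ⊥ :=
    frattini_eq_bot_of_pow_eq_one (p := p) (by rintro ⟨_, x, rfl⟩; ext; simp [hf])
  calc frattini G ≤ (frattini f.range).comap f.rangeRestrict :=
        frattini_le_comap_frattini_of_surjective f.rangeRestrict_surjective
    _ = f.ker := by rw [hrange, MonoidHom.comap_bot, MonoidHom.ker_rangeRestrict]

theorem hom_center_right_pnil_general {p : ℕ} (hp : p.Prime) {G : Type*} [Group G]
    (hZ : Subgroup.center G ≤ frattini G) :
    ∀ h k : G →* Subgroup.center G, (∀ x : G, (h x) ^ p = 1) →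
      ∀ x : G, h ((k x : G)) = 1 := by
  have : Fact p.Prime := ⟨hp⟩
  intro h k hh x
  exact frattini_le_ker_of_pow_eq_one hh (hZ (k x).2)

/-- Let `G` be a finite `p`-group with `Z(G) ≤ Φ(G)`.  Then the ring `Hom(G, Z(G))`
(pointwise multiplication as addition, composition `(k·h)(x) = h(k x)` as
multiplication) is right `p`-nil: whenever a homomorphism `h : G → Z(G)` satisfies
`p·h = 0` (i.e. `(h x)^p = 1` for all `x`), the composition `k·h = h ∘ k` is trivial for
every homomorphism `k : G → Z(G)`. -/
theorem hom_center_right_pnil {p : ℕ} (hp : p.Prime) {G : Type*} [Group G] [Finite G]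
    (hG : IsPGroup p G) (hZ : Subgroup.center G ≤ frattini G) :
    ∀ h k : G →* Subgroup.center G, (∀ x : G, (h x) ^ p = 1) →
      ∀ x : G, h ((k x : G)) = 1 :=
  hom_center_right_pnil_general hp hZ
end

section
/- Let G be a finite p-group with Z(G) ≤ Φ(G), exp(G/G') = p^r and exp(Z(G)) = p^s. Then Aut_c(G) is nilpotent of class at most min(r, s). -/
/-!
For a central automorphism `σ` the deviation `x ↦ x⁻¹ σ x` is a homomorphism `G → Z(G)` that
kills `G'`, so it sends `Gⁿ G'` to `n`-th powers of its values. Let `E(a, b)` be the group of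
central automorphisms whose deviation maps `G` into `Gᵃ G'` and vanishes on `Gᵇ G'`. With
`m = min r s` every central automorphism lies in `E(p, pᵐ)`: its values lie in
`Z(G) ≤ Φ(G) ≤ Gᵖ G'`, and `G^(pᵐ) G'` is killed because it equals `G'` when `m = r`, while its
image consists of `pˢ`-th powers in `Z(G)` when `m = s`. The deviation of `⁅σ, τ⁆` is
`(τ-deviation of the σ-deviation)⁻¹ · (σ-deviation of the τ-deviation)`, which gives
`⁅E(a, b), E(a', b')⁆ ≤ E(a a', n)` whenever `b' ∣ a n` and `b ∣ a' n`. Hence the `k`-th term of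
the lower central series lies in `E(p^(k+1), p^(m-k))`, and `E(·, 1)` is trivial.
-/

open scoped IsMulCommutative commutatorElement

section

open Subgroup

variable {G : Type*} [Group G]

/-- The subgroup `Gⁿ G'`. -/
def powCommutator (G : Type*) [Group G] (n : ℕ) : Subgroup G :=
  (powMonoidHom n : Abelianization G →* Abelianization G).range.comap Abelianization.of

theorem mem_powCommutator {n : ℕ} {x : G} :
    x ∈ powCommutator G n ↔ ∃ a : Abelianization G, a ^ n = .of x :=
  Iff.rfl

@[simp]
theorem powCommutator_one : powCommutator G 1 = ⊤ :=
  eq_top_iff.mpr fun x _ => ⟨.of x, pow_one _⟩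

theorem pow_mem_powCommutator {a : ℕ} {x : G} (hx : x ∈ powCommutator G a) (b : ℕ) :
    x ^ b ∈ powCommutator G (a * b) := by
  obtain ⟨c, hc⟩ := mem_powCommutator.mp hx
  exact mem_powCommutator.mpr ⟨c, by rw [pow_mul, hc, map_pow]⟩

theorem powCommutator_le_of_dvd {a b : ℕ} (h : a ∣ b) :
    powCommutator G b ≤ powCommutator G a := by
  obtain ⟨c, rfl⟩ := h
  intro x hx
  obtain ⟨y, hy⟩ := mem_powCommutator.mp hx
  exact mem_powCommutator.mpr ⟨y ^ c, by rw [← pow_mul, mul_comm, hy]⟩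

theorem map_mem_powCommutator {H : Type*} [Group H] (f : G →* H) {n : ℕ} {x : G}
    (hx : x ∈ powCommutator G n) : f x ∈ powCommutator H n := by
  obtain ⟨a, ha⟩ := mem_powCommutator.mp hx
  exact mem_powCommutator.mpr
    ⟨Abelianization.map f a, by rw [← map_pow, ha, Abelianization.map_of]⟩

/-- `G / Gᵖ G'` is a vector space over `ZMod p`, so its nonzero vectors are detected by linear
functionals. -/
theorem exists_monoidHom_zmod_apply_ne_one {p : ℕ} [Fact p.Prime] {x : G}
    (hx : x ∉ powCommutator G p) : ∃ χ : G →* Multiplicative (ZMod p), χ x ≠ 1 := by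
  let A := Additive (Abelianization G)
  let π : A →+ ModN A p := QuotientAddGroup.mk' _
  have hv : π (.ofMul (.of x)) ≠ 0 := fun h => hx <| by
    obtain ⟨a, ha⟩ := (QuotientAddGroup.eq_zero_iff _).mp h
    exact ⟨a.toMul, by
      rw [powMonoidHom_apply, ← toMul_nsmul, ← natCast_zsmul]
      exact congrArg Additive.toMul ha⟩
  obtain ⟨φ, hφ⟩ := Module.Projective.exists_dual_ne_zero (ZMod p) hv
  exact ⟨(AddMonoidHom.toMultiplicative (φ.toAddMonoidHom.comp π)).comp Abelianization.of,
    fun h => hφ (congrArg Multiplicative.toAdd h)⟩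

theorem frattini_le_powCommutator {p : ℕ} (hp : p.Prime) : frattini G ≤ powCommutator G p := by
  have := Fact.mk hp
  have : IsSimpleGroup (Multiplicative (ZMod p)) := isSimpleGroup_of_prime_card (p := p) (by simp)
  intro x hxΦ
  by_contra hx
  obtain ⟨χ, hχ⟩ := exists_monoidHom_zmod_apply_ne_one hx
  have hsurj : Function.Surjective χ := by
    rw [← MonoidHom.range_eq_top]
    refine (eq_bot_or_eq_top χ.range).resolve_left fun h => hχ ?_
    rw [← mem_bot, ← h]
    exact ⟨x, rfl⟩
  exact hχ (frattini_le_coatom (isCoatom_comap_of_surjective hsurj isCoatom_bot) hxΦ)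

namespace MulAut

def deviation (σ : MulAut G) (x : G) : G := x⁻¹ * σ x

theorem self_mul_deviation (σ : MulAut G) (x : G) : x * σ.deviation x = σ x :=
  mul_inv_cancel_left x (σ x)

theorem deviation_eq_one_iff {σ : MulAut G} {x : G} : σ.deviation x = 1 ↔ σ x = x := by
  rw [deviation, inv_mul_eq_one, eq_comm]

theorem mul_deviation (σ τ : MulAut G) (x : G) :
    (σ * τ).deviation x = τ.deviation x * σ.deviation (τ x) := by
  simp only [deviation, mul_apply]
  group

theorem inv_deviation (σ : MulAut G) (x : G) :
    σ⁻¹.deviation x = (σ.deviation (σ⁻¹ x))⁻¹ := by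
  simp [deviation]

/-- `trivialMod (center G)` is the group `Aut_c(G)` of central automorphisms. -/
def trivialMod (N : Subgroup G) : Subgroup (MulAut G) where
  carrier := {σ | ∀ x, σ.deviation x ∈ N}
  one_mem' x := by simp [deviation]
  mul_mem' hσ hτ x := by
    rw [mul_deviation]
    exact mul_mem (hτ x) (hσ _)
  inv_mem' hσ x := by
    rw [inv_deviation]
    exact inv_mem (hσ _)

theorem deviation_mul {σ : MulAut G} (hσ : σ ∈ trivialMod (center G)) (x y : G) :
    σ.deviation (x * y) = σ.deviation x * σ.deviation y :=
  calc σ.deviation (x * y) = y⁻¹ * σ.deviation x * σ y := by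
        simp only [deviation, map_mul]; group
    _ = σ.deviation x * σ.deviation y := by
      rw [mem_center_iff.mp (hσ x) y⁻¹, mul_assoc]; rfl

def centralDeviation {σ : MulAut G} (hσ : σ ∈ trivialMod (center G)) :
    Abelianization G →* center G :=
  Abelianization.lift
    (MonoidHom.mk' (fun x => ⟨σ.deviation x, hσ x⟩) fun x y => Subtype.ext (deviation_mul hσ x y))

theorem coe_centralDeviation_of {σ : MulAut G} (hσ : σ ∈ trivialMod (center G)) (x : G) :
    (centralDeviation hσ (.of x) : G) = σ.deviation x :=
  rfl

theorem exists_deviation_eq_pow {σ : MulAut G} (hσ : σ ∈ trivialMod (center G)) {n : ℕ} {x : G}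
    (hx : x ∈ powCommutator G n) : ∃ y, σ.deviation x = σ.deviation y ^ n := by
  obtain ⟨a, ha⟩ := mem_powCommutator.mp hx
  obtain ⟨y, rfl⟩ : ∃ y, Abelianization.of y = a := QuotientGroup.mk_surjective a
  refine ⟨y, ?_⟩
  rw [← coe_centralDeviation_of hσ, ← ha, map_pow, SubgroupClass.coe_pow, coe_centralDeviation_of]

theorem deviation_mem_powCommutator {σ : MulAut G} (hσ : σ ∈ trivialMod (center G)) {a n : ℕ}
    (hσa : σ ∈ trivialMod (powCommutator G a)) {x : G} (hx : x ∈ powCommutator G n) :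
    σ.deviation x ∈ powCommutator G (a * n) := by
  obtain ⟨y, hy⟩ := exists_deviation_eq_pow hσ hx
  exact hy ▸ pow_mem_powCommutator (hσa y) n

theorem apply_eq_self_of_mem_powCommutator {σ : MulAut G} (hσ : σ ∈ trivialMod (center G))
    {n : ℕ} (hn : Monoid.exponent (Abelianization G) ∣ n ∨ Monoid.exponent (center G) ∣ n)
    {x : G} (hx : x ∈ powCommutator G n) : σ x = x := by
  obtain ⟨a, ha⟩ := mem_powCommutator.mp hx
  rw [← deviation_eq_one_iff, ← coe_centralDeviation_of hσ, ← ha, map_pow,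
    OneMemClass.coe_eq_one]
  rcases hn with hn | hn
  · rw [← map_pow, Monoid.exponent_dvd_iff_forall_pow_eq_one.mp hn, map_one]
  · exact Monoid.exponent_dvd_iff_forall_pow_eq_one.mp hn _

theorem commutatorElement_deviation (σ : MulAut G) {τ : MulAut G}
    (hτ : τ ∈ trivialMod (center G)) (y : G) :
    ⁅σ, τ⁆.deviation (τ (σ y)) =
      (τ.deviation (σ.deviation y))⁻¹ * σ.deviation (τ.deviation y) := by
  set a := σ.deviation y
  set b := τ.deviation y
  have hab : a * b = b * a := mem_center_iff.mp (hτ y) a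
  have hσy : σ y = y * a := (self_mul_deviation σ y).symm
  have hτy : τ y = y * b := (self_mul_deviation τ y).symm
  have hτa : τ a = a * τ.deviation a := (self_mul_deviation τ a).symm
  have hσb : σ b = b * σ.deviation b := (self_mul_deviation σ b).symm
  have hcomm : ⁅σ, τ⁆ (τ (σ y)) = σ (τ y) := by simp [commutatorElement_def]
  calc ⁅σ, τ⁆.deviation (τ (σ y))
      = (y * b * (a * τ.deviation a))⁻¹ * (y * (a * b) * σ.deviation b) := by
        rw [deviation, hcomm, hτy, map_mul, hσy, map_mul, hτy, hτa, hσb]; group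
    _ = (τ.deviation a)⁻¹ * σ.deviation b := by rw [hab]; group

def centralFiltration (G : Type*) [Group G] (a b : ℕ) : Subgroup (MulAut G) :=
  trivialMod (center G) ⊓ trivialMod (powCommutator G a) ⊓
    fixingSubgroup (MulAut G) (powCommutator G b : Set G)

theorem mem_centralFiltration {a b : ℕ} {σ : MulAut G} :
    σ ∈ centralFiltration G a b ↔ σ ∈ trivialMod (center G) ∧
      σ ∈ trivialMod (powCommutator G a) ∧ ∀ x ∈ powCommutator G b, σ x = x := by
  simp [centralFiltration, and_assoc, mem_fixingSubgroup_iff, MulAut.smul_def]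

theorem centralFiltration_one_right (a : ℕ) : centralFiltration G a 1 = ⊥ :=
  eq_bot_iff.mpr fun σ hσ => mem_bot.mpr <|
    MulEquiv.ext fun x => (mem_centralFiltration.mp hσ).2.2 x (by simp)

theorem commutatorElement_mem_centralFiltration {a b a' b' n : ℕ} {σ τ : MulAut G}
    (hσ : σ ∈ centralFiltration G a b) (hτ : τ ∈ centralFiltration G a' b')
    (hb' : b' ∣ a * n) (hb : b ∣ a' * n) : ⁅σ, τ⁆ ∈ centralFiltration G (a * a') n := by
  obtain ⟨hσZ, hσa, hσb⟩ := mem_centralFiltration.mp hσ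
  obtain ⟨hτZ, hτa, hτb⟩ := mem_centralFiltration.mp hτ
  have hrepr : ∀ x, ∃ y, x = τ (σ y) := fun x => ⟨σ⁻¹ (τ⁻¹ x), by simp⟩
  refine mem_centralFiltration.mpr ⟨?_, fun x => ?_, fun x hx => ?_⟩
  · rw [commutatorElement_def]
    exact mul_mem (mul_mem (mul_mem hσZ hτZ) (inv_mem hσZ)) (inv_mem hτZ)
  · obtain ⟨y, rfl⟩ := hrepr x
    rw [commutatorElement_deviation σ hτZ]
    refine mul_mem (inv_mem ?_) ?_
    · simpa [mul_comm] using deviation_mem_powCommutator hτZ hτa (hσa y)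
    · exact deviation_mem_powCommutator hσZ hσa (hτa y)
  · obtain ⟨y, rfl⟩ := hrepr x
    have hy : y ∈ powCommutator G n := by
      simpa using map_mem_powCommutator ((τ * σ)⁻¹ : MulAut G).toMonoidHom hx
    have hτσ : τ (σ.deviation y) = σ.deviation y :=
      hτb _ (powCommutator_le_of_dvd hb' (deviation_mem_powCommutator hσZ hσa hy))
    have hστ : σ (τ.deviation y) = τ.deviation y :=
      hσb _ (powCommutator_le_of_dvd hb (deviation_mem_powCommutator hτZ hτa hy))
    rw [← deviation_eq_one_iff, commutatorElement_deviation σ hτZ,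
      deviation_eq_one_iff.mpr hτσ, deviation_eq_one_iff.mpr hστ, inv_one, one_mul]

end MulAut

theorem Subgroup.lowerCentralSeries_le_centralFiltration {H : Subgroup (MulAut G)} {p m : ℕ}
    (hH : H ≤ MulAut.centralFiltration G p (p ^ m)) (k : ℕ) :
    H.lowerCentralSeries k ≤ MulAut.centralFiltration G (p ^ (k + 1)) (p ^ (m - k)) := by
  induction k with
  | zero => simpa using hH
  | succ k ih =>
    rw [lowerCentralSeries_succ, commutator_le]
    intro σ hσ τ hτ
    rw [pow_succ]
    refine MulAut.commutatorElement_mem_centralFiltration (ih hσ) (hH hτ) ?_ ?_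
    · rw [← pow_add]; exact pow_dvd_pow p (by omega)
    · rw [← pow_succ']; exact pow_dvd_pow p (by omega)

end

theorem autc_nilpotent_of_center_le_frattini_general {p r s : ℕ} (hp : p.Prime)
    {G : Type*} [Group G]
    (hZ : Subgroup.center G ≤ frattini G)
    (hr : Monoid.exponent (G ⧸ commutator G) = p ^ r)
    (hs : Monoid.exponent (Subgroup.center G) = p ^ s) :
    ∀ C : Subgroup (MulAut G),
      (C : Set (MulAut G)) = {σ : MulAut G | ∀ x : G, x⁻¹ * σ x ∈ Subgroup.center G} →
      lowerCentralSeries C (min r s) = ⊥ := by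
  intro C hC
  obtain rfl : C = MulAut.trivialMod (Subgroup.center G) := SetLike.coe_injective hC
  have hexp : Monoid.exponent (Abelianization G) ∣ p ^ min r s ∨
      Monoid.exponent (Subgroup.center G) ∣ p ^ min r s := by
    rw [show Monoid.exponent (Abelianization G) = p ^ r from hr, hs]
    rcases min_choice r s with h | h <;> rw [h] <;> simp
  have hbase : MulAut.trivialMod (Subgroup.center G) ≤
      MulAut.centralFiltration G p (p ^ min r s) := fun σ hσ =>
    MulAut.mem_centralFiltration.mpr ⟨hσ, fun x => frattini_le_powCommutator hp (hZ (hσ x)),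
      fun _ => MulAut.apply_eq_self_of_mem_powCommutator hσ hexp⟩
  have h := Subgroup.lowerCentralSeries_le_centralFiltration hbase (min r s)
  rw [Nat.sub_self, pow_zero, MulAut.centralFiltration_one_right, le_bot_iff] at h
  exact h

/-- Let `G` be a finite `p`-group with `Z(G) ≤ Φ(G)`, `exp(G/G') = p^r` and
`exp(Z(G)) = p^s`.  Then the central automorphism group `Aut_c(G)` (the subgroup of
`Aut(G)` of automorphisms `σ` with `x⁻¹ σ(x) ∈ Z(G)` for all `x`) is nilpotent of class
at most `min r s`. -/
theorem autc_nilpotent_of_center_le_frattini {p r s : ℕ} (hp : p.Prime)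
    {G : Type*} [Group G] [Finite G] (hG : IsPGroup p G)
    (hZ : Subgroup.center G ≤ frattini G)
    (hr : Monoid.exponent (G ⧸ commutator G) = p ^ r)
    (hs : Monoid.exponent (Subgroup.center G) = p ^ s) :
    ∀ C : Subgroup (MulAut G),
      (C : Set (MulAut G)) = {σ : MulAut G | ∀ x : G, x⁻¹ * σ x ∈ Subgroup.center G} →
      lowerCentralSeries C (min r s) = ⊥ :=
  autc_nilpotent_of_center_le_frattini_general hp hZ hr hs
end

section
/- Let G be a non-abelian finite p-group that is decomposable, i.e., G = G₁ × G₂ with G₁, G₂ nontrivial. Then G has a central automorphism of order p that is not inner. -/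
/-!
Split off a central element `z` of order `p` from the centre of `G₂`; it is central in `G`.
Since `G ⧸ G₂ ≅ G₁` is a nontrivial `p`-group, it maps onto the cyclic group `⟨z⟩`, giving a
homomorphism `φ : G → ⟨z⟩` with `G₂ ≤ ker φ`. Then `x ↦ x · φ x` is a central automorphism of
order `p`. It moves some `x ∈ G₁` out of `G₁`, since `φ x ∈ G₂ ∖ {1}`, so it does not preserve the
normal subgroup `G₁` and cannot be inner.
-/

open Subgroup

namespace IsPGroup

variable {p : ℕ} [Fact p.Prime] {P : Type*} [Group P] [Finite P] [Nontrivial P]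

theorem exists_mem_center_orderOf_eq (hP : IsPGroup p P) : ∃ z ∈ center P, orderOf z = p := by
  obtain ⟨n, hn, hcard⟩ :=
    (hP.to_subgroup (center P)).nontrivial_iff_card.mp hP.center_nontrivial
  obtain ⟨z, hz⟩ := exists_prime_orderOf_dvd_card' (G := center P) p
    (hcard ▸ dvd_pow_self p hn.ne')
  exact ⟨z, z.2, (orderOf_coe z).trans hz⟩

theorem exists_normal_index_eq (hP : IsPGroup p P) : ∃ N : Subgroup P, N.Normal ∧ N.index = p := by
  obtain ⟨n, hn, hcard⟩ := hP.nontrivial_iff_card.mp ‹_›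
  obtain ⟨N, hN⟩ := Sylow.exists_subgroup_card_pow_prime p (hcard ▸ pow_dvd_pow p (n.sub_le 1))
  have hindex : N.index = p := by
    have h := N.card_mul_index
    rw [hN, hcard, ← pow_sub_one_mul hn.ne'] at h
    exact Nat.eq_of_mul_eq_mul_left (pow_pos (Fact.out : p.Prime).pos _) h
  refine ⟨N, normal_of_index_eq_minFac_card ?_, hindex⟩
  rw [hindex, hcard, Nat.Prime.pow_minFac Fact.out hn.ne']

theorem exists_range_eq_zpowers (hP : IsPGroup p P) {H : Type*} [Group H] {z : H}
    (hz : orderOf z = p) : ∃ ψ : P →* H, ψ.range = zpowers z := by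
  obtain ⟨N, hN, hindex⟩ := hP.exists_normal_index_eq
  let e : P ⧸ N ≃* zpowers z :=
    mulEquivOfPrimeCardEq (index_eq_card N ▸ hindex) ((Nat.card_zpowers z).trans hz)
  refine ⟨(zpowers z).subtype.comp (e.toMonoidHom.comp (QuotientGroup.mk' N)), ?_⟩
  rw [MonoidHom.range_comp, MonoidHom.range_eq_top_of_surjective _
    (e.surjective.comp (QuotientGroup.mk'_surjective N)), ← MonoidHom.range_eq_map, range_subtype]

theorem exists_range_eq_zpowers_of_le_ker {G : Type*} [Group G] {K : Subgroup G} [K.Normal]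
    [Finite (G ⧸ K)] [Nontrivial (G ⧸ K)] (hK : IsPGroup p (G ⧸ K)) {H : Type*} [Group H]
    {z : H} (hz : orderOf z = p) : ∃ φ : G →* H, φ.range = zpowers z ∧ K ≤ φ.ker := by
  obtain ⟨ψ, hψ⟩ := hK.exists_range_eq_zpowers hz
  refine ⟨ψ.comp (QuotientGroup.mk' K), ?_, fun x hx => ?_⟩
  · rw [MonoidHom.range_comp, MonoidHom.range_eq_top_of_surjective _
      (QuotientGroup.mk'_surjective K), ← MonoidHom.range_eq_map, hψ]
  · simp [(QuotientGroup.eq_one_iff x).mpr hx]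

end IsPGroup

section DirectProduct

variable {G : Type*} [Group G] {H K : Subgroup G}

theorem Subgroup.coe_mem_center_of_sup_eq_top [H.Normal] [K.Normal] (hdisj : Disjoint H K)
    (hsup : H ⊔ K = ⊤) {z : K} (hz : z ∈ center K) : (z : G) ∈ center G := by
  have hH : H ≤ centralizer {(z : G)} := fun h hh =>
    mem_centralizer_singleton_iff.mpr
      (commute_of_normal_of_disjoint H K inferInstance inferInstance hdisj h z hh z.2).eq
  have hK : K ≤ centralizer {(z : G)} := fun k hk =>
    mem_centralizer_singleton_iff.mpr (congrArg Subtype.val (mem_center_iff.mp hz ⟨k, hk⟩))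
  refine mem_center_iff.mpr fun g => ?_
  exact mem_centralizer_singleton_iff.mp ((hsup ▸ sup_le hH hK) (mem_top g))

theorem MonoidHom.exists_mem_ne_one_of_sup_eq_top {M : Type*} [MulOneClass M] (f : G →* M)
    (hsup : H ⊔ K = ⊤) (hK : K ≤ f.ker) (hf : f ≠ 1) : ∃ x ∈ H, f x ≠ 1 := by
  by_contra! hH
  exact hf (MonoidHom.ext fun x => (hsup ▸ sup_le hH hK) (mem_top x))

end DirectProduct

namespace MulAut

variable {G : Type*} [Group G] (φ : G →* G)

/-- `φ ∘ φ = 1` makes `x ↦ x * (φ x)⁻¹` the inverse of `x ↦ x * φ x`. -/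
def ofCentralHom (hφ : ∀ x, φ x ∈ center G) (hφφ : ∀ x, φ (φ x) = 1) : MulAut G where
  toFun x := x * φ x
  invFun x := x * (φ x)⁻¹
  left_inv x := by simp [hφφ]
  right_inv x := by simp [hφφ]
  map_mul' x y := by
    simp only [map_mul, mul_assoc]
    rw [← mul_assoc y, mem_center_iff.mp (hφ x) y, mul_assoc]

variable (hφ : ∀ x, φ x ∈ center G) (hφφ : ∀ x, φ (φ x) = 1)

@[simp]
theorem ofCentralHom_apply (x : G) : ofCentralHom φ hφ hφφ x = x * φ x := rfl

theorem ofCentralHom_pow_apply (n : ℕ) (x : G) : (ofCentralHom φ hφ hφφ ^ n) x = x * φ x ^ n := by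
  induction n generalizing x with
  | zero => simp
  | succ n ih => rw [pow_succ, mul_apply, ih, ofCentralHom_apply, map_mul, hφφ, mul_one,
      mul_assoc, ← pow_succ']

theorem orderOf_ofCentralHom {p : ℕ} [Fact p.Prime] (hpow : ∀ x, φ x ^ p = 1) (hne : φ ≠ 1) :
    orderOf (ofCentralHom φ hφ hφφ) = p := by
  refine orderOf_eq_prime (MulEquiv.ext fun x => ?_) fun h => hne (MonoidHom.ext fun x => ?_)
  · rw [ofCentralHom_pow_apply, hpow, mul_one, one_apply]
  · simpa using congrArg (· x) h

theorem not_exists_conj_of_mem_of_map_not_mem {N : Subgroup G} [hN : N.Normal] (σ : MulAut G)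
    {x : G} (hx : x ∈ N) (hσx : σ x ∉ N) : ¬ ∃ g : G, ∀ y, σ y = g * y * g⁻¹ :=
  fun ⟨g, hg⟩ => hσx (hg x ▸ hN.conj_mem x hx g)

end MulAut

theorem decomposable_has_noninner_central_auto_general {p : ℕ} (hp : p.Prime) {G : Type*}
    [Group G] [Finite G] (hG : IsPGroup p G)
    (G₁ G₂ : Subgroup G) (h₁ : G₁.Normal) (h₂ : G₂.Normal)
    (hdisj : Disjoint G₁ G₂) (hsup : G₁ ⊔ G₂ = ⊤)
    (hnt₁ : G₁ ≠ ⊥) (hnt₂ : G₂ ≠ ⊥) :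
    ∃ σ : MulAut G, (∀ x : G, x⁻¹ * σ x ∈ Subgroup.center G) ∧
      orderOf σ = p ∧ ¬ ∃ g : G, ∀ x : G, σ x = g * x * g⁻¹ := by
  have : Fact p.Prime := ⟨hp⟩
  have : Nontrivial G₂ := G₂.nontrivial_iff_ne_bot.mpr hnt₂
  have : Nontrivial (G ⧸ G₂) :=
    QuotientGroup.nontrivial_iff.mpr fun h => hnt₁ (disjoint_top.mp (h ▸ hdisj))
  obtain ⟨z, hzc, hz⟩ := (hG.to_subgroup G₂).exists_mem_center_orderOf_eq
  have hzG : (z : G) ∈ center G := coe_mem_center_of_sup_eq_top hdisj hsup hzc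
  rw [← orderOf_coe] at hz
  obtain ⟨φ, hφrange, hG₂ker⟩ := (hG.to_quotient G₂).exists_range_eq_zpowers_of_le_ker hz
  have hφz (x : G) : φ x ∈ zpowers (z : G) := hφrange ▸ ⟨x, rfl⟩
  have hφG₂ (x : G) : φ x ∈ G₂ := zpowers_le.mpr z.2 (hφz x)
  have hφ1 : φ ≠ 1 := fun h => by
    rw [← MonoidHom.range_eq_bot_iff, hφrange, zpowers_eq_bot] at h
    exact hp.ne_one (by rw [← hz, h, orderOf_one])
  obtain ⟨x₀, hx₀, hφx₀⟩ := φ.exists_mem_ne_one_of_sup_eq_top hsup hG₂ker hφ1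
  have hφc (x : G) : φ x ∈ center G := zpowers_le.mpr hzG (hφz x)
  have hφφ (x : G) : φ (φ x) = 1 := hG₂ker (hφG₂ x)
  have hφp (x : G) : φ x ^ p = 1 :=
    orderOf_dvd_iff_pow_eq_one.mp (hz ▸ orderOf_dvd_of_mem_zpowers (hφz x))
  refine ⟨MulAut.ofCentralHom φ hφc hφφ, fun x => by simpa using hφc x,
    MulAut.orderOf_ofCentralHom _ _ _ hφp hφ1,
    MulAut.not_exists_conj_of_mem_of_map_not_mem _ hx₀ fun h => hφx₀ ?_⟩
  rw [MulAut.ofCentralHom_apply, mul_mem_cancel_left hx₀] at h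
  exact disjoint_def.mp hdisj h (hφG₂ x₀)

/-- Let `G` be a non-abelian finite `p`-group which is decomposable: `G = G₁ × G₂`
internally, with `G₁, G₂` nontrivial normal subgroups.  Then `G` has a central
automorphism of order `p` which is not inner. -/
theorem decomposable_has_noninner_central_auto {p : ℕ} (hp : p.Prime) {G : Type*}
    [Group G] [Finite G] (hG : IsPGroup p G)
    (hnab : ∃ a b : G, a * b ≠ b * a)
    (G₁ G₂ : Subgroup G) (h₁ : G₁.Normal) (h₂ : G₂.Normal)
    (hdisj : Disjoint G₁ G₂) (hsup : G₁ ⊔ G₂ = ⊤)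
    (hnt₁ : G₁ ≠ ⊥) (hnt₂ : G₂ ≠ ⊥) :
    ∃ σ : MulAut G, (∀ x : G, x⁻¹ * σ x ∈ Subgroup.center G) ∧
      orderOf σ = p ∧ ¬ ∃ g : G, ∀ x : G, σ x = g * x * g⁻¹ :=
  decomposable_has_noninner_central_auto_general hp hG G₁ G₂ h₁ h₂ hdisj hsup hnt₁ hnt₂
end
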